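/- arXiv:2207.13515 — 2 statements merged into one kernel-verified Lean document; each statement's English description precedes it below -/
import Mathlib

section
/- With P₁ continuous and strictly increasing on [−π/2, π/2], for any incidence angle θ₁ ∈ (−π/2, π/2) there exists a unique reflection angle θ₃ ∈ (−π, −π/2) ∪ (π/2, π] such that P₁(θ₁) = P₁(θ₃), where P₁ is extended to all angles by the formula P₁(θ) = sin θ / V₁(θ) + cos θ · (1/V₁)'(θ). -/
open Real

/-- For any incidence angle `θ₁ ∈ (-π/2, π/2)` there is a unique reflection angle
`θ₃ ∈ (-π, -π/2) ∪ (π/2, π]` with `P₁(θ₁) = P₁(θ₃)`. -/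
theorem reflection_existence_uniqueness
    (V₁ : ℝ → ℝ) (hV₁ : ContDiff ℝ (⊤ : ℕ∞) V₁) (hpos : ∀ θ, 0 < V₁ θ)
    (hper : Function.Periodic V₁ (2 * Real.pi))
    (hconv : ∀ θ, 0 < (V₁ θ) ^ 2 + 2 * (deriv V₁ θ) ^ 2 - V₁ θ * deriv (deriv V₁) θ)
    (P₁ : ℝ → ℝ)
    (hP₁ : ∀ θ, P₁ θ = Real.sin θ / V₁ θ + Real.cos θ * deriv (fun t => (V₁ t)⁻¹) θ)
    (θ₁ : ℝ) (hθ₁ : θ₁ ∈ Set.Ioo (-(Real.pi / 2)) (Real.pi / 2)) :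
    ∃! θ₃ : ℝ,
      θ₃ ∈ Set.Ioo (-Real.pi) (-(Real.pi / 2)) ∪ Set.Ioc (Real.pi / 2) Real.pi ∧
      P₁ θ₁ = P₁ θ₃ := by
  have hπ := Real.pi_pos
  set U : ℝ → ℝ := fun t => (V₁ t)⁻¹ with hUdef
  have hVd : Differentiable ℝ V₁ := hV₁.differentiable (by simp)
  have hVinf : ContDiff ℝ (↑(⊤ : ℕ∞)) V₁ := hV₁.of_le (by simp)
  have hV'cd : ContDiff ℝ (↑(⊤ : ℕ∞)) (deriv V₁) := ((contDiff_infty_iff_deriv).mp hVinf).2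
  have hV'd : Differentiable ℝ (deriv V₁) := hV'cd.differentiable (by simp)
  have hne : ∀ θ, V₁ θ ≠ 0 := fun θ => (hpos θ).ne'
  -- first derivative of U
  have hUderiv : ∀ θ, HasDerivAt U (-(deriv V₁ θ) / (V₁ θ) ^ 2) θ := fun θ =>
    ((hVd θ).hasDerivAt).inv (hne θ)
  have hU' : deriv U = fun θ => -(deriv V₁ θ) / (V₁ θ) ^ 2 :=
    funext fun θ => (hUderiv θ).deriv
  -- second derivative of U
  have hU2 : ∀ θ, HasDerivAt (deriv U)
      ((2 * (deriv V₁ θ) ^ 2 - V₁ θ * deriv (deriv V₁) θ) / (V₁ θ) ^ 3) θ := by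
    intro θ
    rw [hU']
    have h1 : HasDerivAt (fun t => -(deriv V₁ t)) (-(deriv (deriv V₁) θ)) θ :=
      ((hV'd θ).hasDerivAt).neg
    have h2 : HasDerivAt (fun t => (V₁ t) ^ 2) ((2:ℕ) * (V₁ θ) ^ 1 * deriv V₁ θ) θ :=
      ((hVd θ).hasDerivAt).pow 2
    have h3 := h1.div h2 (pow_ne_zero 2 (hne θ))
    refine h3.congr_deriv ?_
    field_simp [hne θ]
    ring
  -- aggregate positivity
  have hGpos : ∀ θ,
      0 < U θ + (2 * (deriv V₁ θ) ^ 2 - V₁ θ * deriv (deriv V₁) θ) / (V₁ θ) ^ 3 := by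
    intro θ
    have h := div_pos (hconv θ) (pow_pos (hpos θ) 3)
    have heq : U θ + (2 * (deriv V₁ θ) ^ 2 - V₁ θ * deriv (deriv V₁) θ) / (V₁ θ) ^ 3
        = ((V₁ θ) ^ 2 + 2 * (deriv V₁ θ) ^ 2 - V₁ θ * deriv (deriv V₁) θ) / (V₁ θ) ^ 3 := by
      simp only [hUdef]
      field_simp [hne θ]
      ring
    rw [heq]; exact h
  -- the function F
  set F : ℝ → ℝ := fun θ => Real.sin θ * U θ + Real.cos θ * deriv U θ with hFdef
  have hF : ∀ θ, P₁ θ = F θ := by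
    intro θ; rw [hP₁ θ]; simp only [hFdef, hUdef]; rw [div_eq_mul_inv]
  have hFderiv : ∀ θ, HasDerivAt F
      (Real.cos θ * (U θ + (2 * (deriv V₁ θ) ^ 2 - V₁ θ * deriv (deriv V₁) θ) / (V₁ θ) ^ 3)) θ := by
    intro θ
    have h1 := ((Real.hasDerivAt_sin θ).mul (hUderiv θ)).add
      ((Real.hasDerivAt_cos θ).mul (hU2 θ))
    refine h1.congr_deriv ?_
    rw [hU']
    ring
  have hFdiff : Differentiable ℝ F := fun θ => (hFderiv θ).differentiableAt
  have hFcont : Continuous F := hFdiff.continuous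
  -- monotone on [-π/2, π/2]
  have hmono : StrictMonoOn F (Set.Icc (-(π / 2)) (π / 2)) := by
    apply strictMonoOn_of_deriv_pos (convex_Icc _ _) hFcont.continuousOn
    intro x hx
    rw [interior_Icc] at hx
    rw [(hFderiv x).deriv]
    exact mul_pos (Real.cos_pos_of_mem_Ioo hx) (hGpos x)
  -- antitone on [π/2, π + π/2]
  have hanti : StrictAntiOn F (Set.Icc (π / 2) (π + π / 2)) := by
    apply strictAntiOn_of_deriv_neg (convex_Icc _ _) hFcont.continuousOn
    intro x hx
    rw [interior_Icc] at hx
    rw [(hFderiv x).deriv]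
    exact mul_neg_of_neg_of_pos
      (Real.cos_neg_of_pi_div_two_lt_of_lt hx.1 hx.2) (hGpos x)
  -- periodicity
  have hV'per : ∀ x, deriv V₁ (x + 2 * π) = deriv V₁ x := by
    intro x
    have h : (fun y => V₁ (y + 2 * π)) = V₁ := funext fun y => hper y
    calc deriv V₁ (x + 2 * π) = deriv (fun y => V₁ (y + 2 * π)) x := by
          rw [deriv_comp_add_const]
      _ = deriv V₁ x := by rw [h]
  have hFper : ∀ x, F (x + 2 * π) = F x := by
    intro x
    simp only [hFdef, hU']
    simp only [hUdef]
    rw [Real.sin_add_two_pi, Real.cos_add_two_pi, hper x, hV'per x]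
  -- key injectivity on the target set
  set S : Set ℝ := Set.Ioo (-Real.pi) (-(Real.pi / 2)) ∪ Set.Ioc (Real.pi / 2) Real.pi with hSdef
  have key : ∀ z ∈ S, ∀ z' ∈ S, F z = F z' → z = z' := by
    have lift : ∀ z ∈ S, ∃ w ∈ Set.Icc (π / 2) (π + π / 2),
        F w = F z ∧ ((z ∈ Set.Ioc (π/2) π ∧ w = z) ∨ (-π < z ∧ z < -(π/2) ∧ w = z + 2 * π)) := by
      intro z hz
      rcases hz with hz | hz
      · exact ⟨z + 2 * π, ⟨by nlinarith [hz.1, hz.2], by nlinarith [hz.2]⟩,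
          hFper z, Or.inr ⟨hz.1, hz.2, rfl⟩⟩
      · exact ⟨z, ⟨hz.1.le, by nlinarith [hz.2]⟩, rfl, Or.inl ⟨hz, rfl⟩⟩
    intro z hz z' hz' hFz
    obtain ⟨w, hw, hFw, hcase⟩ := lift z hz
    obtain ⟨w', hw', hFw', hcase'⟩ := lift z' hz'
    have hww' : w = w' := hanti.injOn hw hw' (by rw [hFw, hFw', hFz])
    rcases hcase with ⟨hz1, rfl⟩ | ⟨hz1a, hz1b, rfl⟩ <;>
      rcases hcase' with ⟨hz2, rfl⟩ | ⟨hz2a, hz2b, rfl⟩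
    · exact hww'
    · exfalso; linarith [hz1.2]
    · exfalso; linarith [hz2.2]
    · linarith
  -- existence via IVT
  have hθ₁Icc : θ₁ ∈ Set.Icc (-(π / 2)) (π / 2) := ⟨hθ₁.1.le, hθ₁.2.le⟩
  have h1 : F (-(π / 2)) < F θ₁ :=
    hmono (Set.left_mem_Icc.mpr (by linarith)) hθ₁Icc hθ₁.1
  have h2 : F θ₁ < F (π / 2) :=
    hmono hθ₁Icc (Set.right_mem_Icc.mpr (by linarith)) hθ₁.2
  have h3 : F (π + π / 2) = F (-(π / 2)) := by
    have : -(π / 2) + 2 * π = π + π / 2 := by ring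
    rw [← this, hFper]
  have hsub := intermediate_value_Ioo' (a := π / 2) (b := π + π / 2)
    (by linarith) hFcont.continuousOn
  have hmem : F θ₁ ∈ Set.Ioo (F (π + π / 2)) (F (π / 2)) := ⟨h3 ▸ h1, h2⟩
  obtain ⟨θ, hθIoo, hFθ⟩ := hsub hmem
  -- produce the representative in S
  have hexists : ∃ θ₃ ∈ S, F θ₃ = F θ₁ := by
    rcases le_or_gt θ π with hle | hgt
    · exact ⟨θ, Or.inr ⟨hθIoo.1, hle⟩, hFθ⟩
    · refine ⟨θ - 2 * π, Or.inl ⟨by linarith [hθIoo.2], by linarith [hθIoo.2]⟩, ?_⟩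
      have h := hFper (θ - 2 * π)
      rw [show θ - 2 * π + 2 * π = θ by ring] at h
      exact h.symm.trans hFθ
  obtain ⟨θ₃, hθ₃S, hθ₃F⟩ := hexists
  refine ⟨θ₃, ⟨hθ₃S, by rw [hF θ₁, hF θ₃, hθ₃F]⟩, ?_⟩
  intro z ⟨hzS, hzF⟩
  apply key z hzS θ₃ hθ₃S
  rw [hF θ₁, hF z] at hzF
  rw [← hzF, hθ₃F]
end

section
/- Let F be a Minkowski norm on ℝ² whose unit ball is strictly convex, let q₁ = (−a, b) with a > 0 lie in the open left half-plane, and let t₀ > d, where d = min{F(p − q₁) : p ∈ η} is the F-distance from q₁ to the line η = {x = 0}. Then the level set {p : F(p − q₁) = t₀} intersects η in exactly two points. -/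
open Real

lemma aux_F_zero (F : ℝ × ℝ → ℝ)
    (hhom : ∀ (c : ℝ) (v : ℝ × ℝ), 0 < c → F (c • v) = c * F v) : F 0 = 0 := by
  have h := hhom 2 0 (by norm_num)
  rw [smul_zero] at h
  linarith

lemma aux_subadd (F : ℝ × ℝ → ℝ)
    (hpos : ∀ v : ℝ × ℝ, v ≠ 0 → 0 < F v)
    (hhom : ∀ (c : ℝ) (v : ℝ × ℝ), 0 < c → F (c • v) = c * F v)
    (hconvset : Convex ℝ {v : ℝ × ℝ | F v ≤ 1}) (u v : ℝ × ℝ) :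
    F (u + v) ≤ F u + F v := by
  by_cases hu : u = 0
  · subst hu; rw [zero_add, aux_F_zero F hhom, zero_add]
  by_cases hv : v = 0
  · subst hv; rw [add_zero, aux_F_zero F hhom, add_zero]
  set s := F u with hs
  set t := F v with ht
  have hs0 : 0 < s := hpos u hu
  have ht0 : 0 < t := hpos v hv
  have hst : 0 < s + t := by linarith
  have h1 : F (s⁻¹ • u) ≤ 1 := by
    rw [hhom s⁻¹ u (by positivity)]
    rw [inv_mul_cancel₀ hs0.ne']
  have h2 : F (t⁻¹ • v) ≤ 1 := by
    rw [hhom t⁻¹ v (by positivity)]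
    rw [inv_mul_cancel₀ ht0.ne']
  have hcomb := hconvset h1 h2 (by positivity : (0:ℝ) ≤ s / (s+t))
    (by positivity : (0:ℝ) ≤ t / (s+t)) (by field_simp)
  have heq : (s/(s+t)) • (s⁻¹ • u) + (t/(s+t)) • (t⁻¹ • v) = (s+t)⁻¹ • (u + v) := by
    rw [smul_smul, smul_smul, smul_add]
    congr 1 <;> congr 1 <;> field_simp
  rw [heq] at hcomb
  have : F (u + v) = (s + t) * F ((s+t)⁻¹ • (u + v)) := by
    rw [← hhom (s+t) _ hst, smul_inv_smul₀ hst.ne']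
  rw [this]
  calc (s + t) * F ((s+t)⁻¹ • (u + v)) ≤ (s + t) * 1 := by
        exact mul_le_mul_of_nonneg_left hcomb hst.le
    _ = s + t := mul_one _

lemma aux_interior_lt (F : ℝ × ℝ → ℝ)
    (hhom : ∀ (c : ℝ) (v : ℝ × ℝ), 0 < c → F (c • v) = c * F v)
    (x : ℝ × ℝ) (hx : x ∈ interior {v : ℝ × ℝ | F v ≤ 1}) : F x < 1 := by
  have hle' := interior_subset hx
  simp only [Set.mem_setOf_eq] at hle'
  have hle : F x ≤ 1 := hle'
  rcases lt_or_eq_of_le hle with h | h1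
  · exact h
  exfalso
  have htend : Filter.Tendsto (fun c : ℝ => c • x) (nhds 1) (nhds x) := by
    have : Continuous fun c : ℝ => c • x := continuous_id.smul continuous_const
    have h := this.tendsto 1
    rwa [one_smul] at h
  have hmem : {c : ℝ | c • x ∈ interior {v : ℝ × ℝ | F v ≤ 1}} ∈ nhds (1:ℝ) :=
    htend (isOpen_interior.mem_nhds hx)
  obtain ⟨ε, hε, hball⟩ := Metric.mem_nhds_iff.mp hmem
  have hcmem : (1 + ε/2) • x ∈ interior {v : ℝ × ℝ | F v ≤ 1} := by
    apply hball
    simp [Real.dist_eq, abs_of_nonneg, hε.le]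
    linarith
  have hmem2 := interior_subset hcmem
  simp only [Set.mem_setOf_eq] at hmem2
  have hF : F ((1 + ε/2) • x) = (1 + ε/2) * F x := hhom _ x (by linarith)
  rw [hF, h1, mul_one] at hmem2
  linarith

lemma aux_strict (F : ℝ × ℝ → ℝ)
    (hhom : ∀ (c : ℝ) (v : ℝ × ℝ), 0 < c → F (c • v) = c * F v)
    (hconv : StrictConvex ℝ {v : ℝ × ℝ | F v ≤ 1})
    (t₀ : ℝ) (ht : 0 < t₀) (u v : ℝ × ℝ) (hu : F u ≤ t₀) (hv : F v ≤ t₀)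
    (huv : u ≠ v) (lam mu : ℝ) (hl : 0 < lam) (hm : 0 < mu) (hs : lam + mu = 1) :
    F (lam • u + mu • v) < t₀ := by
  have hu' : F (t₀⁻¹ • u) ≤ 1 := by
    rw [hhom t₀⁻¹ u (by positivity)]
    rw [← inv_mul_cancel₀ ht.ne']
    exact mul_le_mul_of_nonneg_left hu (by positivity)
  have hv' : F (t₀⁻¹ • v) ≤ 1 := by
    rw [hhom t₀⁻¹ v (by positivity)]
    rw [← inv_mul_cancel₀ ht.ne']
    exact mul_le_mul_of_nonneg_left hv (by positivity)
  have hne : t₀⁻¹ • u ≠ t₀⁻¹ • v := by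
    intro h
    exact huv (smul_right_injective _ (by positivity : t₀⁻¹ ≠ 0) h)
  have hint := hconv hu' hv' hne hl hm hs
  have hlt := aux_interior_lt F hhom _ hint
  have heq : lam • u + mu • v = t₀ • (lam • (t₀⁻¹ • u) + mu • (t₀⁻¹ • v)) := by
    rw [smul_add, smul_comm t₀ lam, smul_comm t₀ mu, smul_inv_smul₀ ht.ne',
      smul_inv_smul₀ ht.ne']
  rw [heq, hhom t₀ _ ht]
  nlinarith

/-- If `q₁ = (-a, b)` with `a > 0` and `t₀` exceeds the `F`-distance `d` from `q₁`
to the line `η = {x = 0}`, then the level set `{p : F(p - q₁) = t₀}` intersects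
`η` in exactly two points. -/
theorem level_set_meets_interface_in_two_points
    (F : ℝ × ℝ → ℝ) (hcont : Continuous F)
    (hpos : ∀ v : ℝ × ℝ, v ≠ 0 → 0 < F v)
    (hhom : ∀ (c : ℝ) (v : ℝ × ℝ), 0 < c → F (c • v) = c * F v)
    (hconv : StrictConvex ℝ {v : ℝ × ℝ | F v ≤ 1})
    (a b t₀ d : ℝ) (ha : 0 < a)
    (hd : d = sInf {r : ℝ | ∃ y : ℝ, r = F ((0, y) - ((-a, b) : ℝ × ℝ))})
    (ht₀ : d < t₀) :
    ∃ p₁ p₂ : ℝ × ℝ, p₁ ≠ p₂ ∧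
      {p : ℝ × ℝ | p.1 = 0 ∧ F (p - ((-a, b) : ℝ × ℝ)) = t₀} = {p₁, p₂} := by
  have hvec : ∀ y : ℝ, ((0:ℝ), y) - ((-a, b) : ℝ × ℝ) = (a, y - b) := by
    intro y
    simp [Prod.ext_iff]
  set g : ℝ → ℝ := fun y => F (a, y - b) with hgdef
  have hgc : Continuous g := by
    apply hcont.comp
    exact continuous_const.prodMk (continuous_id.sub continuous_const)
  have havne : ∀ y : ℝ, ((a, y) : ℝ × ℝ) ≠ 0 := by
    intro y h
    rw [Prod.ext_iff] at h
    exact ha.ne' (by simpa using h.1)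
  -- t₀ > 0
  have hd0 : 0 ≤ d := by
    rw [hd]
    apply Real.sInf_nonneg
    rintro r ⟨y, rfl⟩
    rw [hvec]
    exact (hpos _ (havne _)).le
  have ht₀pos : 0 < t₀ := lt_of_le_of_lt hd0 ht₀
  -- a point below t₀
  have hex : ∃ y : ℝ, g y < t₀ := by
    by_contra h
    push_neg at h
    have hle : t₀ ≤ d := by
      rw [hd]
      refine le_csInf ⟨F (((0:ℝ), (0:ℝ)) - ((-a, b) : ℝ × ℝ)), ⟨0, rfl⟩⟩ ?_
      rintro r ⟨y, rfl⟩
      rw [hvec]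
      exact h y
    linarith
  obtain ⟨y₀, hy₀⟩ := hex
  -- strict midpoint property
  have hmid : ∀ s u t : ℝ, s < u → u < t → g s = t₀ → g t = t₀ → g u < t₀ := by
    intro s u t hsu hut hgs hgt
    have hts : 0 < t - s := by linarith
    set lam := (t - u) / (t - s) with hlam
    set mu := (u - s) / (t - s) with hmu
    have hl : 0 < lam := div_pos (by linarith) hts
    have hm : 0 < mu := div_pos (by linarith) hts
    have hsum : lam + mu = 1 := by rw [hlam, hmu]; field_simp; ring
    have hne : ((a, s - b) : ℝ × ℝ) ≠ (a, t - b) := by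
      intro h
      rw [Prod.ext_iff] at h
      have := h.2
      simp only at this
      linarith
    have hveq : lam • ((a, s - b) : ℝ × ℝ) + mu • ((a, t - b) : ℝ × ℝ) = (a, u - b) := by
      rw [Prod.ext_iff]
      constructor
      · show lam * a + mu * a = a
        rw [← add_mul, hsum, one_mul]
      · show lam * (s - b) + mu * (t - b) = u - b
        rw [hlam, hmu]
        field_simp
        ring
    have hres := aux_strict F hhom hconv t₀ ht₀pos _ _ (le_of_eq hgs) (le_of_eq hgt)
      hne lam mu hl hm hsum
    rw [hveq] at hres
    exact hres
  -- growth bounds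
  have hFneg : 0 ≤ F (-a, 0) := (hpos _ (by
    intro h; rw [Prod.ext_iff] at h
    simp only [Prod.fst_zero, Prod.snd_zero] at h; linarith [h.1])).le
  have c1 : 0 < F (0, 1) := hpos _ (by
    intro h; rw [Prod.ext_iff] at h
    simp only [Prod.fst_zero, Prod.snd_zero] at h; exact one_ne_zero h.2)
  have c1' : 0 < F (0, -1) := hpos _ (by
    intro h; rw [Prod.ext_iff] at h
    simp only [Prod.fst_zero, Prod.snd_zero] at h; linarith [h.2])
  have hsub := aux_subadd F hpos hhom hconv.convex
  have hup : ∀ s : ℝ, 0 < s → s * F (0, 1) - F (-a, 0) ≤ g (b + s) := by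
    intro s hs
    have h1 : F ((0:ℝ), s) ≤ F (a, s) + F (-a, 0) := by
      have h := hsub (a, s) (-a, 0)
      have heq : ((a, s) : ℝ × ℝ) + (-a, 0) = (0, s) := by
        rw [Prod.ext_iff]; constructor <;> simp
      rwa [heq] at h
    have h2 : F ((0:ℝ), s) = s * F (0, 1) := by
      have h := hhom s (0, 1) hs
      have heq : s • (((0:ℝ), (1:ℝ)) : ℝ × ℝ) = (0, s) := by
        rw [Prod.ext_iff]; constructor <;> simp
      rwa [heq] at h
    have h3 : g (b + s) = F (a, s) := by
      rw [hgdef]; simp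
    rw [h3]
    linarith
  have hdown : ∀ s : ℝ, 0 < s → s * F (0, -1) - F (-a, 0) ≤ g (b - s) := by
    intro s hs
    have h1 : F ((0:ℝ), -s) ≤ F (a, -s) + F (-a, 0) := by
      have h := hsub (a, -s) (-a, 0)
      have heq : ((a, -s) : ℝ × ℝ) + (-a, 0) = (0, -s) := by
        rw [Prod.ext_iff]; constructor <;> simp
      rwa [heq] at h
    have h2 : F ((0:ℝ), -s) = s * F (0, -1) := by
      have h := hhom s (0, -1) hs
      have heq : s • (((0:ℝ), (-1:ℝ)) : ℝ × ℝ) = (0, -s) := by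
        rw [Prod.ext_iff]; constructor <;> simp
      rwa [heq] at h
    have h3 : g (b - s) = F (a, -s) := by
      rw [hgdef]; simp
    rw [h3]
    linarith
  -- choose far points
  set Sp := max (max 1 ((t₀ + 1 + F (-a, 0)) / F (0, 1))) (y₀ + 1 - b) with hSp
  have hSp0 : 0 < Sp :=
    lt_of_lt_of_le one_pos (le_trans (le_max_left _ _) (le_max_left _ _))
  have hyp : t₀ < g (b + Sp) := by
    have hb := hup Sp hSp0
    have h1 : (t₀ + 1 + F (-a, 0)) / F (0, 1) ≤ Sp :=
      le_trans (le_max_right _ _) (le_max_left _ _)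
    have h2 : t₀ + 1 + F (-a, 0) ≤ Sp * F (0, 1) := by
      rw [div_le_iff₀ c1] at h1; linarith
    linarith
  have hypgt : y₀ < b + Sp := by
    have : y₀ + 1 - b ≤ Sp := le_max_right _ _
    linarith
  set Sn := max (max 1 ((t₀ + 1 + F (-a, 0)) / F (0, -1))) (b - y₀ + 1) with hSn
  have hSn0 : 0 < Sn :=
    lt_of_lt_of_le one_pos (le_trans (le_max_left _ _) (le_max_left _ _))
  have hyn : t₀ < g (b - Sn) := by
    have hb := hdown Sn hSn0
    have h1 : (t₀ + 1 + F (-a, 0)) / F (0, -1) ≤ Sn :=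
      le_trans (le_max_right _ _) (le_max_left _ _)
    have h2 : t₀ + 1 + F (-a, 0) ≤ Sn * F (0, -1) := by
      rw [div_le_iff₀ c1'] at h1; linarith
    linarith
  have hynlt : b - Sn < y₀ := by
    have : b - y₀ + 1 ≤ Sn := le_max_right _ _
    linarith
  -- IVT
  obtain ⟨y₂, hy₂mem, hy₂⟩ := intermediate_value_Icc hypgt.le hgc.continuousOn
    (Set.mem_Icc.mpr ⟨hy₀.le, hyp.le⟩)
  obtain ⟨y₁, hy₁mem, hy₁⟩ := intermediate_value_Icc' hynlt.le hgc.continuousOn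
    (Set.mem_Icc.mpr ⟨hy₀.le, hyn.le⟩)
  have hy₁lt : y₁ < y₀ := lt_of_le_of_ne hy₁mem.2 (by
    intro h; rw [h] at hy₁; linarith)
  have hy₂gt : y₀ < y₂ := lt_of_le_of_ne hy₂mem.1 (by
    intro h; rw [← h] at hy₂; linarith)
  have hy₁₂ : y₁ < y₂ := lt_trans hy₁lt hy₂gt
  -- uniqueness
  have huniq : ∀ y : ℝ, g y = t₀ → y = y₁ ∨ y = y₂ := by
    intro y hy
    by_contra hcases
    push_neg at hcases
    obtain ⟨h1, h2⟩ := hcases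
    rcases lt_trichotomy y y₁ with h' | h' | h'
    · exact absurd hy₁ (ne_of_lt (hmid y y₁ y₂ h' hy₁₂ hy hy₂))
    · exact h1 h'
    · rcases lt_trichotomy y y₂ with h'' | h'' | h''
      · exact absurd hy (ne_of_lt (hmid y₁ y y₂ h' h'' hy₁ hy₂))
      · exact h2 h''
      · exact absurd hy₂ (ne_of_lt (hmid y₁ y₂ y hy₁₂ h'' hy₁ hy))
  refine ⟨(0, y₁), (0, y₂), ?_, ?_⟩
  · intro h
    rw [Prod.ext_iff] at h
    exact absurd h.2 (ne_of_lt hy₁₂)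
  · ext p
    simp only [Set.mem_setOf_eq, Set.mem_insert_iff, Set.mem_singleton_iff]
    constructor
    · rintro ⟨hp1, hp2⟩
      have hsubv : p - ((-a, b) : ℝ × ℝ) = (a, p.2 - b) := by
        rw [Prod.ext_iff]
        constructor
        · show p.1 - (-a) = a
          rw [hp1]; ring
        · rfl
      rw [hsubv] at hp2
      rcases huniq p.2 hp2 with h | h
      · left; rw [Prod.ext_iff]; exact ⟨hp1, h⟩
      · right; rw [Prod.ext_iff]; exact ⟨hp1, h⟩
    · rintro (rfl | rfl)
      · refine ⟨rfl, ?_⟩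
        show F (((0:ℝ), y₁) - ((-a, b) : ℝ × ℝ)) = t₀
        rw [hvec]
        exact hy₁
      · refine ⟨rfl, ?_⟩
        show F (((0:ℝ), y₂) - ((-a, b) : ℝ × ℝ)) = t₀
        rw [hvec]
        exact hy₂
end
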